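/- arXiv:2304.04927 — 3 statements merged into one kernel-verified Lean document; each statement's English description precedes it below -/
import Mathlib

section
/- Let A ∈ ℝ^{n×n} be Schur stable, B ∈ ℝ^{n×m}, B_d ∈ ℝ^{n×q}, C ∈ ℝ^{p×n}, D ∈ ℝ^{p×m}, and suppose the DC gain G₁ = C (I_n − A)⁻¹ B_d ∈ ℝ^{p×q} has full column rank q. Set L = (G₁ᵀ G₁)⁻¹ G₁ᵀ. Consider the plant x(t+1) = A x(t) + B u(t) + B_d d, y(t) = C x(t) + D u(t) with constant unknown disturbance d ∈ ℝ^q, together with the disturbance estimator x̂(t+1) = A x̂(t) + B u(t) + B_d d̂(t), ŷ(t) = C x̂(t) + D u(t), d̂(t+1) = d̂(t) − ε L (ŷ(t) − y(t)). Then there exists ε* > 0 such that for every ε ∈ (0, ε*), for every input sequence u and all initial conditions x(0), x̂(0), d̂(0), there exist constants c ≥ 0 and ρ ∈ (0,1) with ‖d̂(t) − d‖ ≤ c ρ^t for all t ≥ 0; i.e., d̂(t) → d exponentially. -/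
/-!
With `e = x̂ - x` and `δ = d̂ - d` the input drops out: `e⁺ = A e + B_d δ`, `δ⁺ = δ - ε L C e`.
The matrix `F = (I - A)⁻¹ B_d` satisfies `A F = F - B_d`, and full column rank of `G₁ = C F`
gives `L C F = I`, so the shifted state `w = e - F δ` obeys `w⁺ = A w + ε (F L C w + F δ)` and
`δ⁺ = (1 - ε) δ - ε L C w`: a stable fast subsystem weakly coupled to the contraction `1 - ε`.
By Gelfand's formula `‖A ^ N‖ ≤ a ^ N` for some `a < 1` and `N > 0`, which makes `A` an
`a`-contraction for the adapted norm `ν v = ∑_{k<N} a⁻ᵏ ‖Aᵏ v‖`; for small `ε` the Lyapunov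
function `ν w + θ ‖δ‖` then decays geometrically.
-/

open Finset Filter Matrix WithLp
open scoped NNReal

section AdaptedNorm

variable {𝕜 E : Type*} [NontriviallyNormedField 𝕜] [SeminormedAddCommGroup E] [NormedSpace 𝕜 E]

noncomputable def adaptedNorm (T : E →L[𝕜] E) (a : ℝ) (N : ℕ) (v : E) : ℝ :=
  ∑ k ∈ range N, a⁻¹ ^ k * ‖(T ^ k) v‖

variable {T : E →L[𝕜] E} {a : ℝ} {N : ℕ}

lemma adaptedNorm_nonneg (ha : 0 ≤ a) (v : E) : 0 ≤ adaptedNorm T a N v := by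
  unfold adaptedNorm; positivity

lemma norm_le_adaptedNorm (ha : 0 ≤ a) (hN : 0 < N) (v : E) : ‖v‖ ≤ adaptedNorm T a N v :=
  calc ‖v‖ = a⁻¹ ^ 0 * ‖(T ^ 0) v‖ := by simp
    _ ≤ adaptedNorm T a N v :=
      single_le_sum (f := fun k => a⁻¹ ^ k * ‖(T ^ k) v‖) (fun k _ => by positivity)
        (mem_range.mpr hN)

lemma exists_adaptedNorm_le (ha : 0 ≤ a) :
    ∃ κ, 0 ≤ κ ∧ ∀ v, adaptedNorm T a N v ≤ κ * ‖v‖ := by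
  refine ⟨∑ k ∈ range N, a⁻¹ ^ k * ‖T ^ k‖, by positivity, fun v => ?_⟩
  rw [adaptedNorm, sum_mul]
  refine sum_le_sum fun k _ => ?_
  rw [mul_assoc]
  exact mul_le_mul_of_nonneg_left ((T ^ k).le_opNorm v) (by positivity)

lemma adaptedNorm_add_le (ha : 0 ≤ a) (v w : E) :
    adaptedNorm T a N (v + w) ≤ adaptedNorm T a N v + adaptedNorm T a N w := by
  rw [adaptedNorm, adaptedNorm, adaptedNorm, ← sum_add_distrib]
  refine sum_le_sum fun k _ => ?_
  rw [map_add, ← mul_add]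
  exact mul_le_mul_of_nonneg_left (norm_add_le _ _) (by positivity)

lemma adaptedNorm_smul (c : 𝕜) (v : E) :
    adaptedNorm T a N (c • v) = ‖c‖ * adaptedNorm T a N v := by
  simp only [adaptedNorm, map_smul, norm_smul, mul_sum]
  exact sum_congr rfl fun k _ => by ring

lemma adaptedNorm_apply_le (ha : 0 < a) (hTN : ‖T ^ N‖ ≤ a ^ N) (v : E) :
    adaptedNorm T a N (T v) ≤ a * adaptedNorm T a N v := by
  set g : ℕ → ℝ := fun k => a⁻¹ ^ k * ‖(T ^ k) v‖
  have hshift : adaptedNorm T a N (T v) = a * ∑ k ∈ range N, g (k + 1) := by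
    rw [adaptedNorm, mul_sum]
    refine sum_congr rfl fun k _ => ?_
    have hT : (T ^ k) (T v) = (T ^ (k + 1)) v := by rw [pow_succ]; rfl
    rw [hT]
    simp only [g]
    have hpow : a * a⁻¹ ^ (k + 1) = a⁻¹ ^ k := by
      rw [pow_succ, mul_comm, mul_assoc, inv_mul_cancel₀ ha.ne', mul_one]
    rw [← mul_assoc, hpow]
  have htail : g N ≤ g 0 :=
    calc g N ≤ a⁻¹ ^ N * (a ^ N * ‖v‖) :=
          mul_le_mul_of_nonneg_left (((T ^ N).le_opNorm v).trans (by gcongr)) (by positivity)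
      _ = g 0 := by simp [g, ← mul_assoc, inv_mul_cancel₀ (pow_ne_zero N ha.ne')]
  have hsum := sum_range_succ' g N
  rw [sum_range_succ] at hsum
  rw [hshift]
  exact mul_le_mul_of_nonneg_left (by simp only [adaptedNorm]; linarith) ha.le

end AdaptedNorm

theorem exists_small_gain_contraction {a k₁ k₂ k₃ : ℝ} (ha : a < 1) (hk₁ : 0 ≤ k₁)
    (hk₂ : 0 ≤ k₂) (hk₃ : 0 ≤ k₃) :
    ∃ εstar ∈ Set.Ioc (0 : ℝ) 1, ∃ θ > (0 : ℝ), ∀ ε ∈ Set.Ioo 0 εstar, ∃ ρ ∈ Set.Ioo (0 : ℝ) 1,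
      ∀ P Q P' Q' : ℝ, 0 ≤ P → 0 ≤ Q →
        P' ≤ (a + ε * k₁) * P + ε * k₂ * Q → Q' ≤ (1 - ε) * Q + ε * k₃ * P →
        P' + θ * Q' ≤ ρ * (P + θ * Q) := by
  set θ := 2 * k₂ + 1
  have hθ : 0 < θ := by positivity
  have hk : 0 < k₁ + θ * k₃ + 1 := by positivity
  refine ⟨min 1 ((1 - a) / (k₁ + θ * k₃ + 1)), ⟨lt_min one_pos (div_pos (by linarith) hk),
    min_le_left _ _⟩, θ, hθ, fun ε ⟨hε0, hε⟩ => ?_⟩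
  have hε1 : ε < 1 := hε.trans_le (min_le_left _ _)
  have hεa : ε * (k₁ + θ * k₃ + 1) < 1 - a := (lt_div_iff₀ hk).mp (hε.trans_le (min_le_right _ _))
  refine ⟨max (a + ε * (k₁ + θ * k₃)) (1 - ε / 2),
    ⟨lt_max_of_lt_right (by linarith), max_lt (by nlinarith) (by linarith)⟩,
    fun P Q P' Q' hP hQ hP' hQ' => ?_⟩
  have h₁ := mul_le_mul_of_nonneg_right (le_max_left (a + ε * (k₁ + θ * k₃)) (1 - ε / 2)) hP
  have h₂ := mul_le_mul_of_nonneg_right (le_max_right (a + ε * (k₁ + θ * k₃)) (1 - ε / 2))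
    (mul_nonneg hθ.le hQ)
  nlinarith

section DisturbanceError

variable {E V : Type*} [SeminormedAddCommGroup E] [NormedSpace ℝ E]
  [SeminormedAddCommGroup V] [NormedSpace ℝ V]

lemma shiftedState_step {A : E →L[ℝ] E} {Bd F : V →L[ℝ] E} {K : E →L[ℝ] V}
    (hAF : ∀ v, A (F v) = F v - Bd v) (hKF : Function.LeftInverse K F) (ε : ℝ) (x : E) (δ : V) :
    A x + Bd δ - F (δ - ε • K x) = A (x - F δ) + ε • (F (K (x - F δ)) + F δ) := by
  simp only [map_sub, map_smul, hAF, hKF δ]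
  module

lemma disturbanceError_step {F : V →L[ℝ] E} {K : E →L[ℝ] V}
    (hKF : Function.LeftInverse K F) (ε : ℝ) (x : E) (δ : V) :
    δ - ε • K x = (1 - ε) • δ - ε • K (x - F δ) := by
  simp only [map_sub, hKF δ]
  module

lemma adaptedNorm_closedLoop_le {A : E →L[ℝ] E} {F : V →L[ℝ] E} {K : E →L[ℝ] V} {a κ ε : ℝ}
    {N : ℕ} (ha0 : 0 < a) (hN : 0 < N) (hAN : ‖A ^ N‖ ≤ a ^ N)
    (hκ : 0 ≤ κ) (hνκ : ∀ v, adaptedNorm A a N v ≤ κ * ‖v‖) (hε : 0 ≤ ε) (w : E) (δ : V) :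
    adaptedNorm A a N (A w + ε • (F (K w) + F δ)) ≤
      (a + ε * (κ * ‖F ∘L K‖)) * adaptedNorm A a N w + ε * (κ * ‖F‖) * ‖δ‖ :=
  calc adaptedNorm A a N (A w + ε • (F (K w) + F δ))
      ≤ adaptedNorm A a N (A w) + ε * adaptedNorm A a N (F (K w) + F δ) := by
        grw [adaptedNorm_add_le ha0.le, adaptedNorm_smul, Real.norm_of_nonneg hε]
    _ ≤ a * adaptedNorm A a N w + ε * (κ * (‖F ∘L K‖ * adaptedNorm A a N w + ‖F‖ * ‖δ‖)) := by
        grw [adaptedNorm_apply_le ha0 hAN, hνκ (F (K w) + F δ), norm_add_le]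
        gcongr
        · exact ((F ∘L K).le_opNorm w).trans (by gcongr; exact norm_le_adaptedNorm ha0.le hN w)
        · exact F.le_opNorm δ
    _ = _ := by ring

lemma norm_one_sub_smul_sub_smul_le {K : E →L[ℝ] V} {ε : ℝ} (hε0 : 0 ≤ ε) (hε1 : 0 ≤ 1 - ε)
    (w : E) (δ : V) : ‖(1 - ε) • δ - ε • K w‖ ≤ (1 - ε) * ‖δ‖ + ε * ‖K‖ * ‖w‖ := by
  grw [norm_sub_le, norm_smul, norm_smul, Real.norm_of_nonneg hε0, Real.norm_of_nonneg hε1,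
    K.le_opNorm, mul_assoc]

theorem exists_disturbance_error_decay {A : E →L[ℝ] E} {Bd F : V →L[ℝ] E} {K : E →L[ℝ] V}
    (hAF : ∀ v, A (F v) = F v - Bd v) (hKF : Function.LeftInverse K F) {a : ℝ} (ha0 : 0 < a)
    (ha1 : a < 1) {N : ℕ} (hN : 0 < N) (hAN : ‖A ^ N‖ ≤ a ^ N) :
    ∃ εstar > (0 : ℝ), ∀ ε ∈ Set.Ioo 0 εstar, ∃ ρ ∈ Set.Ioo (0 : ℝ) 1,
      ∀ (e : ℕ → E) (δ : ℕ → V), (∀ t, e (t + 1) = A (e t) + Bd (δ t)) →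
        (∀ t, δ (t + 1) = δ t - ε • K (e t)) → ∃ c ≥ 0, ∀ t, ‖δ t‖ ≤ c * ρ ^ t := by
  obtain ⟨κ, hκ, hνκ⟩ := exists_adaptedNorm_le (T := A) (N := N) ha0.le
  obtain ⟨εstar, ⟨hεstar, hεstar1⟩, θ, hθ, hcontr⟩ := exists_small_gain_contraction ha1
    (mul_nonneg hκ (norm_nonneg (F ∘L K))) (mul_nonneg hκ (norm_nonneg F)) (norm_nonneg K)
  refine ⟨εstar, hεstar, fun ε hε => ?_⟩
  obtain ⟨ρ, hρ, hstep⟩ := hcontr ε hε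
  have hε0 : 0 ≤ ε := hε.1.le
  have hε1 : 0 ≤ 1 - ε := by linarith [hε.2, hεstar1]
  refine ⟨ρ, hρ, fun e δ he hδ => ?_⟩
  set w : ℕ → E := fun t => e t - F (δ t)
  have hνw : ∀ t, ‖w t‖ ≤ adaptedNorm A a N (w t) := fun t => norm_le_adaptedNorm ha0.le hN _
  have hw : ∀ t, adaptedNorm A a N (w (t + 1)) ≤
      (a + ε * (κ * ‖F ∘L K‖)) * adaptedNorm A a N (w t) + ε * (κ * ‖F‖) * ‖δ t‖ := fun t => by
    simp only [w, he, hδ, shiftedState_step hAF hKF]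
    exact adaptedNorm_closedLoop_le ha0 hN hAN hκ hνκ hε0 _ _
  have hδ' : ∀ t, ‖δ (t + 1)‖ ≤ (1 - ε) * ‖δ t‖ + ε * ‖K‖ * adaptedNorm A a N (w t) := fun t => by
    rw [hδ, disturbanceError_step hKF]
    grw [norm_one_sub_smul_sub_smul_le hε0 hε1, hνw]
  set W : ℕ → ℝ := fun t => adaptedNorm A a N (w t) + θ * ‖δ t‖
  have hW : ∀ t, W t ≤ ρ ^ t * W 0 := fun t =>
    le_geom hρ.1.le t fun k _ => hstep _ _ _ _ (adaptedNorm_nonneg ha0.le _) (norm_nonneg _)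
      (hw k) (hδ' k)
  refine ⟨W 0 / θ, div_nonneg (add_nonneg (adaptedNorm_nonneg ha0.le _)
    (mul_nonneg hθ.le (norm_nonneg _))) hθ.le, fun t => ?_⟩
  rw [div_mul_eq_mul_div, le_div_iff₀ hθ, mul_comm (W 0)]
  linarith [hW t, adaptedNorm_nonneg (N := N) ha0.le (T := A) (w t)]

end DisturbanceError

theorem exists_norm_pow_le_pow_of_spectralRadius_lt_one {𝓐 : Type*} [NormedRing 𝓐]
    [NormedAlgebra ℂ 𝓐] [CompleteSpace 𝓐] {x : 𝓐} (hx : spectralRadius ℂ x < 1) :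
    ∃ a : ℝ, 0 < a ∧ a < 1 ∧ ∃ N : ℕ, 0 < N ∧ ‖x ^ N‖ ≤ a ^ N := by
  obtain ⟨a, hxa, ha1⟩ := ENNReal.lt_iff_exists_nnreal_btwn.mp hx
  have ha0 : 0 < a := ENNReal.coe_pos.mp (zero_le.trans_lt hxa)
  obtain ⟨N, hNa, hN⟩ := ((spectrum.pow_nnnorm_pow_one_div_tendsto_nhds_spectralRadius x
    |>.eventually_lt_const hxa).and (eventually_gt_atTop 0)).exists
  refine ⟨a, ha0, by exact_mod_cast ha1, N, hN, ?_⟩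
  have hN' : (0 : ℝ) < N := by exact_mod_cast hN
  have := ENNReal.rpow_le_rpow hNa.le hN'.le
  rw [← ENNReal.rpow_mul, one_div_mul_cancel hN'.ne', ENNReal.rpow_one,
    ENNReal.rpow_natCast] at this
  exact_mod_cast this

theorem spectralRadius_lt_of_forall_norm_lt {𝓐 : Type*} [NormedRing 𝓐]
    [NormedAlgebra ℂ 𝓐] [CompleteSpace 𝓐] {x : 𝓐} {r : ℝ≥0} (hr : 0 < r)
    (h : ∀ z ∈ spectrum ℂ x, ‖z‖ < r) : spectralRadius ℂ x < r := by
  cases subsingleton_or_nontrivial 𝓐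
  · simpa [spectralRadius, spectrum.of_subsingleton] using hr
  · exact spectrum.spectralRadius_lt_of_forall_lt x fun z hz => h z hz

theorem Matrix.isUnit_of_rank_eq_card {n K : Type*} [Fintype n] [DecidableEq n] [Field K]
    {M : Matrix n n K} (hM : M.rank = Fintype.card n) : IsUnit M := by
  have htop : LinearMap.range M.mulVecLin = ⊤ :=
    Submodule.eq_top_of_finrank_eq (by rw [← Matrix.rank, hM, Module.finrank_fintype_fun_eq_card])
  rw [← mulVec_surjective_iff_isUnit, ← coe_mulVecLin]
  exact LinearMap.range_eq_top.mp htop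

theorem Matrix.ofReal_mem_spectrum_map_ofReal {n : Type*} [Fintype n] [DecidableEq n]
    {A : Matrix n n ℝ} {r : ℝ} (hr : r ∈ spectrum ℝ A) :
    (r : ℂ) ∈ spectrum ℂ (A.map ((↑) : ℝ → ℂ)) := by
  rw [spectrum.mem_iff, isUnit_iff_isUnit_det] at hr ⊢
  have hmap : algebraMap ℂ (Matrix n n ℂ) r - A.map (↑) =
      Complex.ofRealHom.mapMatrix (algebraMap ℝ (Matrix n n ℝ) r - A) := by
    ext i j; by_cases h : i = j <;> simp [h, algebraMap_eq_diagonal, diagonal]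
  rwa [hmap, ← RingHom.map_det, isUnit_map_iff]

theorem Matrix.isUnit_det_one_sub_of_forall_norm_lt_one {n : Type*} [Fintype n] [DecidableEq n]
    {A : Matrix n n ℝ} (hA : ∀ μ ∈ spectrum ℂ (A.map ((↑) : ℝ → ℂ)), ‖μ‖ < 1) :
    IsUnit (1 - A).det := by
  have h1 : (1 : ℝ) ∉ spectrum ℝ A := fun h => by
    simpa using hA _ (ofReal_mem_spectrum_map_ofReal h)
  simpa [spectrum.notMem_iff, isUnit_iff_isUnit_det] using h1

theorem Matrix.mul_one_sub_inv_mul {n m R : Type*} [Fintype n] [DecidableEq n] [CommRing R]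
    {A : Matrix n n R} (hA : IsUnit (1 - A).det) (B : Matrix n m R) :
    A * ((1 - A)⁻¹ * B) = (1 - A)⁻¹ * B - B := by
  have h := mul_nonsing_inv_cancel_left (A := 1 - A) B hA
  rw [Matrix.sub_mul, Matrix.one_mul] at h
  generalize (1 - A)⁻¹ * B = F at h ⊢
  rw [← h, sub_sub_cancel]

theorem Matrix.inv_transpose_mul_self_mul_transpose_mul_self {m n R : Type*} [Fintype m]
    [Fintype n] [DecidableEq n] [Field R] [LinearOrder R] [IsStrictOrderedRing R]
    {G : Matrix m n R} (hG : G.rank = Fintype.card n) : (Gᵀ * G)⁻¹ * Gᵀ * G = 1 := by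
  have hunit : IsUnit (Gᵀ * G) := isUnit_of_rank_eq_card (by rw [rank_transpose_mul_self, hG])
  rw [Matrix.mul_assoc, nonsing_inv_mul _ ((isUnit_iff_isUnit_det _).mp hunit)]

section L2OpNorm

open scoped Matrix.Norms.L2Operator

lemma EuclideanSpace.norm_toLp_ofReal {ι : Type*} [Fintype ι] (v : ι → ℝ) :
    ‖toLp 2 (fun i => (v i : ℂ))‖ = ‖toLp 2 v‖ := by
  simp [EuclideanSpace.norm_eq, Complex.norm_real]

lemma Matrix.l2_opNorm_le_l2_opNorm_map_ofReal {m n : Type*} [Fintype m] [Fintype n]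
    [DecidableEq n] (M : Matrix m n ℝ) : ‖M‖ ≤ ‖M.map ((↑) : ℝ → ℂ)‖ := by
  rw [l2_opNorm_def]
  refine ContinuousLinearMap.opNorm_le_bound _ (norm_nonneg _) fun v => ?_
  have hv : M.map ((↑) : ℝ → ℂ) *ᵥ (fun i => (ofLp v i : ℂ)) = fun i => ((M *ᵥ ofLp v) i : ℂ) :=
    funext fun i => (RingHom.map_mulVec Complex.ofRealHom M (ofLp v) i).symm
  have := (M.map ((↑) : ℝ → ℂ)).l2_opNorm_mulVec (toLp 2 fun i => (ofLp v i : ℂ))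
  simp only [EuclideanSpace.equiv, hv] at this
  simpa [EuclideanSpace.norm_toLp_ofReal, toLpLin_apply] using this

theorem Matrix.exists_norm_toEuclideanCLM_pow_le {n : Type*} [Fintype n] [DecidableEq n]
    {A : Matrix n n ℝ} (hA : ∀ μ ∈ spectrum ℂ (A.map ((↑) : ℝ → ℂ)), ‖μ‖ < 1) :
    ∃ a : ℝ, 0 < a ∧ a < 1 ∧ ∃ N : ℕ, 0 < N ∧ ‖toEuclideanCLM (𝕜 := ℝ) A ^ N‖ ≤ a ^ N := by
  obtain ⟨a, ha0, ha1, N, hN, hAN⟩ := exists_norm_pow_le_pow_of_spectralRadius_lt_one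
    (spectralRadius_lt_of_forall_norm_lt one_pos (by simpa using hA))
  refine ⟨a, ha0, ha1, N, hN, ?_⟩
  rw [← map_pow, l2_opNorm_toEuclideanCLM]
  calc ‖A ^ N‖ ≤ ‖(A ^ N).map ((↑) : ℝ → ℂ)‖ := l2_opNorm_le_l2_opNorm_map_ofReal _
    _ = ‖A.map ((↑) : ℝ → ℂ) ^ N‖ := congrArg norm (map_pow Complex.ofRealHom.mapMatrix A N)
    _ ≤ a ^ N := hAN

end L2OpNorm

/-- **Data-Driven Disturbance Estimator (Theorem 1, state-space form).**
If `A` is Schur stable and the DC gain `G₁ = C (I - A)⁻¹ B_d` has full column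
rank, then with the gain `L = (G₁ᵀG₁)⁻¹G₁ᵀ` there exists `ε* > 0` such that for
every `ε ∈ (0, ε*)`, for every input sequence, constant disturbance `d`, and
all initial conditions of plant and estimator, the disturbance estimate
`dh(t)` converges to `d` exponentially. -/
theorem disturbance_estimator_convergence
    (n m q p : ℕ)
    (A : Matrix (Fin n) (Fin n) ℝ) (B : Matrix (Fin n) (Fin m) ℝ)
    (Bd : Matrix (Fin n) (Fin q) ℝ) (C : Matrix (Fin p) (Fin n) ℝ)
    (D : Matrix (Fin p) (Fin m) ℝ)
    (hA : ∀ μ ∈ spectrum ℂ (A.map Complex.ofReal), ‖μ‖ < 1)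
    (G₁ : Matrix (Fin p) (Fin q) ℝ) (hG₁ : G₁ = C * (1 - A)⁻¹ * Bd)
    (hrank : G₁.rank = q)
    (L : Matrix (Fin q) (Fin p) ℝ) (hL : L = (G₁ᵀ * G₁)⁻¹ * G₁ᵀ) :
    ∃ εstar > (0 : ℝ), ∀ ε ∈ Set.Ioo (0 : ℝ) εstar,
      ∀ (u : ℕ → Fin m → ℝ) (d : Fin q → ℝ)
        (x xh : ℕ → Fin n → ℝ) (dh : ℕ → Fin q → ℝ)
        (y yh : ℕ → Fin p → ℝ),
        (∀ t, x (t + 1) = A.mulVec (x t) + B.mulVec (u t) + Bd.mulVec d) →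
        (∀ t, y t = C.mulVec (x t) + D.mulVec (u t)) →
        (∀ t, xh (t + 1) = A.mulVec (xh t) + B.mulVec (u t) + Bd.mulVec (dh t)) →
        (∀ t, yh t = C.mulVec (xh t) + D.mulVec (u t)) →
        (∀ t, dh (t + 1) = dh t - ε • L.mulVec (yh t - y t)) →
        ∃ c ≥ (0 : ℝ), ∃ ρ ∈ Set.Ioo (0 : ℝ) 1,
          ∀ t : ℕ,
            ‖(WithLp.equiv 2 (Fin q → ℝ)).symm (dh t - d)‖ ≤ c * ρ ^ t := by
  obtain ⟨a, ha0, ha1, N, hN, hAN⟩ := exists_norm_toEuclideanCLM_pow_le hA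
  set F := (1 - A)⁻¹ * Bd
  have hAF : A * F = F - Bd :=
    mul_one_sub_inv_mul (isUnit_det_one_sub_of_forall_norm_lt_one hA) Bd
  have hLCF : L * C * F = 1 := by
    have hCF : C * F = G₁ := by rw [hG₁, Matrix.mul_assoc]
    rw [Matrix.mul_assoc L, hCF, hL]
    exact inv_transpose_mul_self_mul_transpose_mul_self (by rw [hrank, Fintype.card_fin])
  obtain ⟨εstar, hεstar, hdecay⟩ := exists_disturbance_error_decay
    (A := toEuclideanCLM (𝕜 := ℝ) A) (Bd := (toEuclideanLin Bd).toContinuousLinearMap)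
    (F := (toEuclideanLin F).toContinuousLinearMap)
    (K := (toEuclideanLin (L * C)).toContinuousLinearMap)
    (fun v => by
      show toLp 2 (A *ᵥ F *ᵥ ofLp v) = toLp 2 (F *ᵥ ofLp v - Bd *ᵥ ofLp v)
      rw [mulVec_mulVec, hAF, sub_mulVec])
    (fun v => by
      show toLp 2 ((L * C) *ᵥ F *ᵥ ofLp v) = v
      rw [mulVec_mulVec, hLCF, one_mulVec]) ha0 ha1 hN hAN
  refine ⟨εstar, hεstar, fun ε hε u d x xh dh y yh hx hy hxh hyh hdh => ?_⟩
  obtain ⟨ρ, hρ, hδ⟩ := hdecay ε hε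
  have he : ∀ t, xh (t + 1) - x (t + 1) = A *ᵥ (xh t - x t) + Bd *ᵥ (dh t - d) := fun t => by
    rw [hxh, hx, mulVec_sub, mulVec_sub]; abel
  have hd : ∀ t, dh (t + 1) - d = dh t - d - ε • (L * C) *ᵥ (xh t - x t) := fun t => by
    rw [hdh, hyh, hy, add_sub_add_right_eq_sub, ← mulVec_sub, ← mulVec_mulVec]; abel
  obtain ⟨c, hc, hct⟩ := hδ (fun t => toLp 2 (xh t - x t)) (fun t => toLp 2 (dh t - d))
    (fun t => congrArg (toLp 2) (he t)) (fun t => congrArg (toLp 2) (hd t))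
  exact ⟨c, hc, ρ, hρ, hct⟩
end

section
/- Let A ∈ ℝ^{n×n} be Schur stable, B_d ∈ ℝ^{n×q}, C ∈ ℝ^{p×n}, and suppose the DC gain G₁ = C (I_n − A)⁻¹ B_d ∈ ℝ^{p×q} has full column rank q. Set L = (G₁ᵀ G₁)⁻¹ G₁ᵀ ∈ ℝ^{q×p}. Then there exists ε* > 0 such that for all ε ∈ (0, ε*), the block matrix [[A, B_d], [−ε L C, I_q]] ∈ ℝ^{(n+q)×(n+q)} is Schur stable. -/
/-!
Write `R(z) = (z - A)⁻¹` and `K = LC`, so that `K R(1) B_d = L G₁ = I`. Any eigenvalue `μ` of the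
block matrix with `|μ| ≥ 1` lies in the resolvent set of `A`, and the Schur complement of the top
left block shows that `μ` is an eigenvalue of `I - ε K R(μ) B_d`. By the resolvent identity
`K R(μ) B_d = I + (1 - μ) W(μ)` with `W(μ) = K R(μ) R(1) B_d`, so `μ - (1 - ε)` is an eigenvalue of
`ε (μ - 1) W(μ)`. Since the resolvent is bounded on `|z| ≥ 1`, say `‖W(μ)‖ ≤ P`, this gives
`|μ - (1 - ε)| ≤ ε |μ - 1| P`, which is incompatible with `|μ| ≥ 1` once `2 ε P < 1`.
-/

open Filter Matrix Set

theorem spectrum.resolvent_sub_resolvent_eq_smul_mul {R A : Type*} [CommRing R] [Ring A]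
    [Algebra R A] {a : A} {s t : R} (hs : s ∈ resolventSet R a) (ht : t ∈ resolventSet R a) :
    resolvent a s - resolvent a t = (t - s) • (resolvent a s * resolvent a t) := by
  calc resolvent a s - resolvent a t
      = resolvent a s * (algebraMap R A t - a) * resolvent a t
        - resolvent a s * (algebraMap R A s - a) * resolvent a t := by
        rw [mul_assoc, resolvent, resolvent, Ring.mul_inverse_cancel _ ht,
          Ring.inverse_mul_cancel _ hs, mul_one, one_mul]
    _ = resolvent a s * algebraMap R A (t - s) * resolvent a t := by
        rw [← sub_mul, ← mul_sub, sub_sub_sub_cancel_right, map_sub]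
    _ = (t - s) • (resolvent a s * resolvent a t) := by
        rw [Algebra.algebraMap_eq_smul_one, mul_smul_one, smul_mul_assoc]

theorem spectrum.exists_norm_resolvent_le_of_forall_norm_lt {𝕜 A : Type*}
    [NontriviallyNormedField 𝕜] [ProperSpace 𝕜] [NormedRing A] [NormedAlgebra 𝕜 A]
    [CompleteSpace A] {a : A} {r : ℝ} (ha : ∀ μ ∈ spectrum 𝕜 a, ‖μ‖ < r) :
    ∃ K, ∀ z : 𝕜, r ≤ ‖z‖ → ‖resolvent a z‖ ≤ K := by
  have hρ : ∀ z : 𝕜, r ≤ ‖z‖ → z ∈ resolventSet 𝕜 a :=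
    fun z hz => not_not.mp fun hσ => (ha z hσ).not_ge hz
  obtain ⟨R, hR⟩ : ∃ R, ∀ z : 𝕜, R ≤ ‖z‖ → resolvent a z ∈ Metric.closedBall 0 1 := by
    have h := (resolvent_tendsto_cobounded (𝕜 := 𝕜) a).eventually
      (Metric.closedBall_mem_nhds 0 one_pos)
    rw [← comap_norm_atTop, eventually_comap, eventually_atTop] at h
    obtain ⟨R, hR⟩ := h
    exact ⟨R, fun z hz => hR _ hz z rfl⟩
  have hcompact : IsCompact ({z : 𝕜 | r ≤ ‖z‖} ∩ Metric.closedBall 0 R) :=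
    (isCompact_closedBall 0 R).inter_left (isClosed_le continuous_const continuous_norm)
  obtain ⟨K, hK⟩ := hcompact.exists_bound_of_continuousOn fun z hz =>
    (spectrum.hasDerivAt_resolvent_const_left (hρ z hz.1)).continuousAt.continuousWithinAt
  refine ⟨max K 1, fun z hz => ?_⟩
  rcases le_total ‖z‖ R with hzR | hRz
  · exact (hK z ⟨hz, mem_closedBall_zero_iff.mpr hzR⟩).trans (le_max_left _ _)
  · exact (mem_closedBall_zero_iff.mp (hR z hRz)).trans (le_max_right _ _)

theorem Complex.mul_norm_sub_one_mul_lt_norm_sub {μ : ℂ} {ε P : ℝ} (hε : 0 < ε) (hε1 : ε < 1)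
    (hεP : 2 * ε * P < 1) (hμ : 1 ≤ ‖μ‖) : ε * ‖μ - 1‖ * P < ‖μ - (1 - ε)‖ := by
  have hεnorm : ‖1 - (ε : ℂ)‖ = 1 - ε := by
    rw [← Complex.ofReal_one, ← Complex.ofReal_sub, Complex.norm_real,
      Real.norm_of_nonneg (by linarith)]
  have hlow : ε ≤ ‖μ - (1 - ε)‖ := by
    linarith [norm_sub_norm_le μ (1 - ε)]
  have hup : ‖μ - 1‖ ≤ ‖μ - (1 - ε)‖ + ε := by
    have := norm_sub_le (μ - (1 - ε)) (ε : ℂ)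
    rwa [Complex.norm_real, Real.norm_of_nonneg hε.le, sub_sub, sub_add_cancel] at this
  by_contra! h
  set r := ‖μ - 1‖
  have hrP : 1 ≤ r * P := le_of_mul_le_mul_left (by nlinarith) hε
  have hP : 0 ≤ P := by nlinarith [norm_nonneg (μ - 1)]
  nlinarith [mul_le_mul_of_nonneg_right (hup.trans (add_le_add_left h ε)) hP]

theorem RingHom.map_nonsing_inv {n K L : Type*} [Fintype n] [DecidableEq n] [Field K] [Field L]
    (f : K →+* L) (M : Matrix n n K) : M⁻¹.map f = (M.map f)⁻¹ := by
  rw [inv_def, inv_def, Matrix.map_smul' _ _ _ (map_mul f), ← RingHom.mapMatrix_apply,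
    ← RingHom.mapMatrix_apply, f.map_adjugate, ← f.map_det, Ring.inverse_eq_inv',
    Ring.inverse_eq_inv', map_inv₀]

namespace Matrix

theorem resolvent_map {n K L : Type*} [Fintype n] [DecidableEq n] [Field K] [Field L]
    (f : K →+* L) (M : Matrix n n K) (r : K) :
    resolvent (M.map f) (f r) = (resolvent M r).map f := by
  have hr : (algebraMap K (Matrix n n K) r).map f = algebraMap L _ (f r) := by
    rw [algebraMap_eq_diagonal, algebraMap_eq_diagonal, diagonal_map (map_zero f)]
    rfl
  rw [resolvent, resolvent, ← nonsing_inv_eq_ringInverse, ← nonsing_inv_eq_ringInverse,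
    RingHom.map_nonsing_inv, Matrix.map_sub _ (map_sub f), hr]

theorem isUnit_of_rank_eq_card_s1 {n K : Type*} [Fintype n] [DecidableEq n] [Field K]
    {M : Matrix n n K} (h : M.rank = Fintype.card n) : IsUnit M := by
  rw [← mulVec_surjective_iff_isUnit]
  refine (LinearMap.range_eq_top (f := M.mulVecLin)).mp (Submodule.eq_top_of_finrank_eq ?_)
  rw [← Matrix.rank, h, Module.finrank_fintype_fun_eq_card]

theorem nonsing_inv_transpose_mul_self_mul_transpose_mul_self {m n K : Type*} [Fintype m]
    [Fintype n] [DecidableEq n] [Field K] [LinearOrder K] [IsStrictOrderedRing K]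
    {G : Matrix m n K} (h : G.rank = Fintype.card n) : (Gᵀ * G)⁻¹ * Gᵀ * G = 1 := by
  have hunit : IsUnit (Gᵀ * G) := isUnit_of_rank_eq_card_s1 (by rw [rank_transpose_mul_self, h])
  rw [Matrix.mul_assoc, nonsing_inv_mul _ ((isUnit_iff_isUnit_det _).mp hunit)]

theorem mem_spectrum_fromBlocks_iff {𝕜 m n : Type*} [Field 𝕜] [Fintype m] [Fintype n]
    [DecidableEq m] [DecidableEq n] {A : Matrix m m 𝕜} (B : Matrix m n 𝕜) (C : Matrix n m 𝕜)
    (D : Matrix n n 𝕜) {μ : 𝕜} (hμ : μ ∈ resolventSet 𝕜 A) :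
    μ ∈ spectrum 𝕜 (fromBlocks A B C D) ↔ μ ∈ spectrum 𝕜 (D + C * resolvent A μ * B) := by
  rw [spectrum.mem_resolventSet_iff] at hμ
  let _ := hμ.invertible
  have hblocks : algebraMap 𝕜 _ μ - fromBlocks A B C D =
      fromBlocks (algebraMap 𝕜 _ μ - A) (-B) (-C) (algebraMap 𝕜 _ μ - D) := by
    ext (i | i) (j | j) <;> simp [algebraMap_matrix_apply]
  simp only [spectrum.mem_iff, hblocks, isUnit_iff_isUnit_det (fromBlocks _ _ _ _),
    det_fromBlocks₁₁, IsUnit.mul_iff, ← isUnit_iff_isUnit_det, hμ, true_and, invOf_eq_nonsing_inv,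
    nonsing_inv_eq_ringInverse, resolvent, Matrix.neg_mul, Matrix.mul_neg, neg_neg, sub_sub]

theorem sub_mem_spectrum_smul_of_mem_spectrum_fromBlocks {𝕜 m n : Type*} [Field 𝕜] [Fintype m]
    [Fintype n] [DecidableEq m] [DecidableEq n] {A : Matrix m m 𝕜} {B : Matrix m n 𝕜}
    {K : Matrix n m 𝕜} (hKB : K * resolvent A (1 : 𝕜) * B = 1) {μ ε : 𝕜}
    (hμ : μ ∈ resolventSet 𝕜 A) (h1 : (1 : 𝕜) ∈ resolventSet 𝕜 A)
    (hσ : μ ∈ spectrum 𝕜 (fromBlocks A B (-(ε • K)) 1)) :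
    μ - (1 - ε) ∈ spectrum 𝕜 ((ε * (μ - 1)) • (K * resolvent A μ * resolvent A (1 : 𝕜) * B)) := by
  set W := K * resolvent A μ * resolvent A (1 : 𝕜) * B
  have hKRB : K * resolvent A μ * B = 1 + (1 - μ) • W := by
    rw [← hKB, ← sub_eq_iff_eq_add', ← Matrix.sub_mul, ← Matrix.mul_sub,
      spectrum.resolvent_sub_resolvent_eq_smul_mul hμ h1]
    simp only [Matrix.mul_smul, Matrix.smul_mul, Matrix.mul_assoc, W]
  have hschur : 1 + -(ε • K) * resolvent A μ * B = algebraMap 𝕜 _ (1 - ε) + (ε * (μ - 1)) • W := by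
    simp only [Matrix.neg_mul, Matrix.smul_mul]
    rw [hKRB, Algebra.algebraMap_eq_smul_one]
    module
  rw [mem_spectrum_fromBlocks_iff _ _ _ hμ, hschur] at hσ
  rwa [← neg_add_cancel_left (algebraMap 𝕜 (Matrix n n 𝕜) (1 - ε)) (_ • W), ← spectrum.add_mem_iff,
    sub_add_cancel]

open scoped Matrix.Norms.Operator

theorem exists_pos_norm_lt_one_of_mem_spectrum_fromBlocks {m n : Type*} [Fintype m]
    [Fintype n] [DecidableEq m] [DecidableEq n] {A : Matrix m m ℂ}
    (hA : ∀ μ ∈ spectrum ℂ A, ‖μ‖ < 1) {B : Matrix m n ℂ} {K : Matrix n m ℂ}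
    (hKB : K * resolvent A (1 : ℂ) * B = 1) :
    ∃ εstar > (0 : ℝ), ∀ ε ∈ Ioo (0 : ℝ) εstar,
      ∀ μ ∈ spectrum ℂ (fromBlocks A B (-((ε : ℂ) • K)) 1), ‖μ‖ < 1 := by
  have hρ : ∀ z : ℂ, 1 ≤ ‖z‖ → z ∈ resolventSet ℂ A :=
    fun z hz => not_not.mp fun hσ => (hA z hσ).not_ge hz
  obtain ⟨Kr, hKr⟩ := spectrum.exists_norm_resolvent_le_of_forall_norm_lt hA
  set P := ‖K‖ * Kr * ‖resolvent A (1 : ℂ)‖ * ‖B‖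
  refine ⟨1 / (2 * |P| + 2), by positivity, ?_⟩
  rintro ε ⟨hε0, hε⟩ μ hμ
  by_contra! hμ1
  rw [lt_div_iff₀ (by positivity)] at hε
  have hσ := sub_mem_spectrum_smul_of_mem_spectrum_fromBlocks hKB (hρ μ hμ1) (hρ 1 norm_one.ge) hμ
  -- `spectrum.norm_le_norm_of_mem` needs `‖(1 : Matrix n n ℂ)‖ = 1`.
  have : Nonempty n := by
    by_contra h
    rw [not_nonempty_iff] at h
    simp [spectrum.of_subsingleton] at hσ
  have hW : ‖K * resolvent A μ * resolvent A (1 : ℂ) * B‖ ≤ P := by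
    grw [linfty_opNorm_mul, linfty_opNorm_mul, linfty_opNorm_mul, hKr μ hμ1]
  have hεP : ε * P ≤ ε * |P| := mul_le_mul_of_nonneg_left (le_abs_self P) hε0.le
  refine (Complex.mul_norm_sub_one_mul_lt_norm_sub (P := P) hε0 (by nlinarith [abs_nonneg P])
    (by linarith) hμ1).not_ge ?_
  calc ‖μ - (1 - ε)‖ ≤ ‖((ε : ℂ) * (μ - 1)) • (K * resolvent A μ * resolvent A 1 * B)‖ :=
        spectrum.norm_le_norm_of_mem hσ
    _ ≤ ε * ‖μ - 1‖ * P := by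
        rw [norm_smul, norm_mul, Complex.norm_real, Real.norm_of_nonneg hε0.le]
        gcongr

end Matrix

/-- If `A` is Schur stable and the DC gain `G₁ = C (I - A)⁻¹ B_d` has full
column rank, then with `L = (G₁ᵀG₁)⁻¹G₁ᵀ` there exists `ε* > 0` such that for
all `ε ∈ (0, ε*)` the block matrix `[[A, B_d], [−εLC, I_q]]` is Schur stable. -/
theorem block_error_matrix_schur_stable
    (n q p : ℕ)
    (A : Matrix (Fin n) (Fin n) ℝ)
    (Bd : Matrix (Fin n) (Fin q) ℝ) (C : Matrix (Fin p) (Fin n) ℝ)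
    (hA : ∀ μ ∈ spectrum ℂ (A.map Complex.ofReal), ‖μ‖ < 1)
    (G₁ : Matrix (Fin p) (Fin q) ℝ) (hG₁ : G₁ = C * (1 - A)⁻¹ * Bd)
    (hrank : G₁.rank = q)
    (L : Matrix (Fin q) (Fin p) ℝ) (hL : L = (G₁ᵀ * G₁)⁻¹ * G₁ᵀ) :
    ∃ εstar > (0 : ℝ), ∀ ε ∈ Set.Ioo (0 : ℝ) εstar,
      ∀ μ ∈ spectrum ℂ
        ((Matrix.fromBlocks A Bd (-(ε • (L * C))) (1 : Matrix (Fin q) (Fin q) ℝ)).map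
          Complex.ofReal),
        ‖μ‖ < 1 := by
  have hLG : L * G₁ = 1 :=
    hL ▸ nonsing_inv_transpose_mul_self_mul_transpose_mul_self (by rw [hrank, Fintype.card_fin])
  have hDC : L * C * resolvent A (1 : ℝ) * Bd = 1 := by
    rw [← hLG, hG₁, resolvent, map_one, ← nonsing_inv_eq_ringInverse]
    simp only [Matrix.mul_assoc]
  have hDCℂ : (L * C).map Complex.ofRealHom * resolvent (A.map Complex.ofRealHom)
      (Complex.ofRealHom 1) * Bd.map Complex.ofRealHom = 1 := by
    rw [resolvent_map, ← Matrix.map_mul, ← Matrix.map_mul, hDC,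
      Matrix.map_one _ (map_zero _) (map_one _)]
  have hblock (ε : ℝ) : (fromBlocks A Bd (-(ε • (L * C))) 1).map Complex.ofReal =
      fromBlocks (A.map Complex.ofRealHom) (Bd.map Complex.ofRealHom)
        (-((ε : ℂ) • (L * C).map Complex.ofRealHom)) 1 := by
    rw [fromBlocks_map, Matrix.map_neg _ Complex.ofReal_neg,
      Matrix.map_smulₛₗ _ Complex.ofReal ε (Complex.ofReal_mul ε),
      Matrix.map_one _ Complex.ofReal_zero Complex.ofReal_one]
    rfl
  obtain ⟨εstar, hpos, hstable⟩ := exists_pos_norm_lt_one_of_mem_spectrum_fromBlocks hA hDCℂ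
  exact ⟨εstar, hpos, fun ε hε μ hμ => hstable ε hε μ (hblock ε ▸ hμ)⟩
end

section
/- Let A ∈ ℝ^{n×n} and let P ∈ ℝ^{n×n} be symmetric positive definite with P − AᵀPA positive definite. Let M₁ ∈ ℝ^{n×n}, M₂ ∈ ℝ^{n×q}, M₃ ∈ ℝ^{q×n} be arbitrary, and for ε ∈ ℝ define N(ε) = [[A + ε M₁, ε M₂], [ε M₃, (1 − ε) I_q]] ∈ ℝ^{(n+q)×(n+q)} and 𝒫 = diag(P, I_q). Then there exists ε* ∈ (0, 1] such that for all ε ∈ (0, ε*), the matrix 𝒫 − N(ε)ᵀ 𝒫 N(ε) is positive definite. -/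
/-!
Write `ε = δ²`. Conjugating `𝒫 - N(ε)ᵀ 𝒫 N(ε)` by `diag(I, δ⁻¹ I)` divides its off-diagonal blocks
by `δ` and its lower-right block `ε (2 - ε) I - ε² M₂ᵀ P M₂` by `δ²`, leaving a matrix `R(δ)` that
depends continuously on `δ` and equals `diag(P - AᵀPA, 2 I)` at `δ = 0`. Positive definiteness is
an open condition on symmetric matrices, so `R(δ)`, and with it its congruent matrix
`𝒫 - N(δ²)ᵀ 𝒫 N(δ²)`, stays positive definite for all small `δ > 0`.
-/

open Matrix Filter Topology

namespace Matrix

variable {m k : Type*} [Fintype m] [Fintype k]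

theorem PosDef.fromBlocks_zero [DecidableEq m] [DecidableEq k] {A : Matrix m m ℝ}
    {D : Matrix k k ℝ} (hA : A.PosDef) (hD : D.PosDef) : (fromBlocks A 0 0 D).PosDef := by
  have := hA.isUnit.invertible
  have hsemi : (fromBlocks A 0 0ᴴ D).PosSemidef :=
    (PosDef.fromBlocks₁₁ 0 D hA).2 (by simpa using hD.posSemidef)
  rw [conjTranspose_zero] at hsemi
  refine hsemi.posDef_iff_det_ne_zero.2 ?_
  rw [det_fromBlocks_zero₁₂]
  exact mul_ne_zero hA.det_pos.ne' hD.det_pos.ne'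

theorem PosDef.eventually_posDef_of_isHermitian {M₀ : Matrix m m ℝ} (h₀ : M₀.PosDef) :
    ∀ᶠ M in 𝓝 M₀, M.IsHermitian → M.PosDef := by
  have hquad : Continuous fun p : Matrix m m ℝ × (m → ℝ) => p.2 ⬝ᵥ p.1 *ᵥ p.2 := by
    fun_prop
  have hsphere : ∀ᶠ M in 𝓝 M₀, ∀ y ∈ Metric.sphere (0 : m → ℝ) 1, 0 < y ⬝ᵥ M *ᵥ y := by
    refine (isCompact_sphere 0 1).eventually_forall_of_forall_eventually fun y hy => ?_
    have hy0 : y ≠ 0 := ne_zero_of_mem_unit_sphere ⟨y, hy⟩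
    exact continuousAt_const.eventually_lt (hquad.continuousAt (x := (M₀, y)))
      (by simpa using h₀.dotProduct_mulVec_pos hy0)
  filter_upwards [hsphere] with M hM hherm
  refine PosDef.of_dotProduct_mulVec_pos hherm fun x hx => ?_
  have hnorm : 0 < ‖x‖ := norm_pos_iff.2 hx
  have hc : (0 : ℝ) ≤ ‖x‖⁻¹ := by positivity
  have := hM (‖x‖⁻¹ • x) (by simp [norm_smul, hnorm.ne'])
  rw [smul_dotProduct, mulVec_smul, dotProduct_smul, smul_eq_mul, smul_eq_mul] at this
  simpa using pos_of_mul_pos_right (pos_of_mul_pos_right this hc) hc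

theorem mulVec_injective_fromBlocks_one_smul_one [DecidableEq m] [DecidableEq k] {δ : ℝ}
    (hδ : δ ≠ 0) :
    Function.Injective (fromBlocks (1 : Matrix m m ℝ) 0 0 (δ • (1 : Matrix k k ℝ))).mulVec := by
  rw [mulVec_injective_iff_isUnit, isUnit_iff_isUnit_det, det_fromBlocks_zero₁₂]
  simp [hδ]

end Matrix

section RescaledLyapunovDefect

variable {m k : Type*} [Fintype m] [Fintype k] [DecidableEq k]
  (A P M₁ : Matrix m m ℝ) (M₂ : Matrix m k ℝ) (M₃ : Matrix k m ℝ)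

/-- `diag(I, δ⁻¹ I) (𝒫 - N(δ²)ᵀ 𝒫 N(δ²)) diag(I, δ⁻¹ I)`, written so that it makes sense at
`δ = 0`. -/
noncomputable def rescaledLyapunovDefect (δ : ℝ) : Matrix (m ⊕ k) (m ⊕ k) ℝ :=
  fromBlocks
    (P - (A + δ ^ 2 • M₁)ᵀ * P * (A + δ ^ 2 • M₁) - δ ^ 4 • (M₃ᵀ * M₃))
    (-δ • ((A + δ ^ 2 • M₁)ᵀ * P * M₂ + (1 - δ ^ 2) • M₃ᵀ))
    (-δ • (M₂ᵀ * P * (A + δ ^ 2 • M₁) + (1 - δ ^ 2) • M₃))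
    ((2 - δ ^ 2) • 1 - δ ^ 2 • (M₂ᵀ * P * M₂))

theorem rescaledLyapunovDefect_zero :
    rescaledLyapunovDefect A P M₁ M₂ M₃ 0 = fromBlocks (P - Aᵀ * P * A) 0 0 ((2 : ℝ) • 1) := by
  simp [rescaledLyapunovDefect]

theorem continuous_rescaledLyapunovDefect :
    Continuous (rescaledLyapunovDefect A P M₁ M₂ M₃) := by
  unfold rescaledLyapunovDefect
  fun_prop

variable {P} in
theorem isHermitian_rescaledLyapunovDefect (hP : P.IsHermitian) (δ : ℝ) :
    (rescaledLyapunovDefect A P M₁ M₂ M₃ δ).IsHermitian := by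
  rw [IsHermitian, conjTranspose_eq_transpose_of_trivial] at hP
  refine IsHermitian.fromBlocks ?_ ?_ ?_ <;>
    simp only [IsHermitian, conjTranspose_eq_transpose_of_trivial, transpose_sub, transpose_smul,
      transpose_mul, transpose_add, transpose_one, transpose_transpose, hP, Matrix.mul_assoc]

theorem lyapunovDefect_eq_conjTranspose_mul_rescaled_mul [DecidableEq m] (δ : ℝ) :
    fromBlocks P 0 0 1 - (fromBlocks (A + δ ^ 2 • M₁) (δ ^ 2 • M₂) (δ ^ 2 • M₃) ((1 - δ ^ 2) • 1))ᵀ *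
        fromBlocks P 0 0 1 * fromBlocks (A + δ ^ 2 • M₁) (δ ^ 2 • M₂) (δ ^ 2 • M₃) ((1 - δ ^ 2) • 1)
      = (fromBlocks 1 0 0 (δ • 1))ᴴ * rescaledLyapunovDefect A P M₁ M₂ M₃ δ *
          fromBlocks (1 : Matrix m m ℝ) 0 0 (δ • (1 : Matrix k k ℝ)) := by
  rw [conjTranspose_eq_transpose_of_trivial]
  simp only [rescaledLyapunovDefect, fromBlocks_transpose, fromBlocks_multiply, sub_eq_add_neg,
    fromBlocks_neg, fromBlocks_add, fromBlocks_inj]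
  refine ⟨?_, ?_, ?_, ?_⟩ <;>
    simp only [transpose_smul, transpose_add, transpose_one, transpose_zero, Matrix.smul_mul,
      Matrix.mul_smul, Matrix.one_mul, Matrix.mul_one, Matrix.zero_mul, Matrix.mul_zero, add_zero,
      zero_add, smul_smul, neg_smul, smul_zero, Matrix.mul_assoc, smul_add, Matrix.add_mul,
      Matrix.mul_add] <;>
    module

end RescaledLyapunovDefect

/-- Lyapunov perturbation step: if `P ≻ 0` satisfies `P − AᵀPA ≻ 0`, then for
`N(ε) = [[A + εM₁, εM₂], [εM₃, (1−ε)I_q]]` and `𝒫 = diag(P, I_q)` there is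
`ε* ∈ (0, 1]` such that `𝒫 − N(ε)ᵀ𝒫N(ε) ≻ 0` for all `ε ∈ (0, ε*)`. -/
theorem lyapunov_perturbation
    (n q : ℕ)
    (A : Matrix (Fin n) (Fin n) ℝ)
    (P : Matrix (Fin n) (Fin n) ℝ) (hP : P.PosDef)
    (hLyap : (P - Aᵀ * P * A).PosDef)
    (M₁ : Matrix (Fin n) (Fin n) ℝ) (M₂ : Matrix (Fin n) (Fin q) ℝ)
    (M₃ : Matrix (Fin q) (Fin n) ℝ) :
    ∃ εstar ∈ Set.Ioc (0 : ℝ) 1, ∀ ε ∈ Set.Ioo (0 : ℝ) εstar,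
      ((Matrix.fromBlocks P 0 0 (1 : Matrix (Fin q) (Fin q) ℝ)) -
        (Matrix.fromBlocks (A + ε • M₁) (ε • M₂) (ε • M₃)
          ((1 - ε) • (1 : Matrix (Fin q) (Fin q) ℝ)))ᵀ *
        (Matrix.fromBlocks P 0 0 (1 : Matrix (Fin q) (Fin q) ℝ)) *
        (Matrix.fromBlocks (A + ε • M₁) (ε • M₂) (ε • M₃)
          ((1 - ε) • (1 : Matrix (Fin q) (Fin q) ℝ)))).PosDef := by
  have hR₀ : (rescaledLyapunovDefect A P M₁ M₂ M₃ 0).PosDef := by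
    rw [rescaledLyapunovDefect_zero]
    exact hLyap.fromBlocks_zero (PosDef.one.smul two_pos)
  have hR : ∀ᶠ δ in 𝓝 0, (rescaledLyapunovDefect A P M₁ M₂ M₃ δ).PosDef := by
    filter_upwards [(continuous_rescaledLyapunovDefect A P M₁ M₂ M₃).tendsto 0 |>.eventually
      hR₀.eventually_posDef_of_isHermitian] with δ hδ
    exact hδ (isHermitian_rescaledLyapunovDefect A M₁ M₂ M₃ hP.isHermitian δ)
  obtain ⟨a, ha, hRball⟩ := Metric.eventually_nhds_iff.1 hR
  set δstar := min a 1
  have hδstar : 0 < δstar := lt_min ha one_pos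
  refine ⟨δstar ^ 2, ⟨by positivity, pow_le_one₀ hδstar.le (min_le_right a 1)⟩, fun ε hε => ?_⟩
  obtain ⟨δ, hδ, rfl⟩ : ∃ δ, 0 < δ ∧ δ ^ 2 = ε := ⟨√ε, Real.sqrt_pos.2 hε.1, Real.sq_sqrt hε.1.le⟩
  have hδa : dist δ 0 < a := by
    rw [Real.dist_0_eq_abs, abs_of_pos hδ]
    exact (lt_of_pow_lt_pow_left₀ 2 hδstar.le hε.2).trans_le (min_le_left a 1)
  rw [lyapunovDefect_eq_conjTranspose_mul_rescaled_mul]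
  exact (hRball hδa).conjTranspose_mul_mul_same (mulVec_injective_fromBlocks_one_smul_one hδ.ne')
end
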